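/- Let G and G' be finite simple graphs, each containing at least one edge, and suppose Z(G') = Z*(G'). Then Z(G □ G') ≥ Z(G) · Z(G') + 1. -/

import Mathlib

open Finset

/-- A fort of a graph: a nonempty (finite) set of vertices `F` such that no vertex
outside `F` has exactly one neighbor in `F`. -/
def IsFort {V : Type*} (G : SimpleGraph V) (F : Finset V) : Prop :=
  F.Nonempty ∧ ∀ v ∉ F, ¬ ∃! u, u ∈ F ∧ G.Adj v u

/-- The fort number: the maximum cardinality of a collection of pairwise disjoint forts. -/
noncomputable def fortNumber {V : Type*} (G : SimpleGraph V) : ℕ :=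
  sSup {k | ∃ 𝒞 : Finset (Finset V), (∀ F ∈ 𝒞, IsFort G F) ∧
    (↑𝒞 : Set (Finset V)).Pairwise Disjoint ∧ 𝒞.card = k}

/-- The fractional zero forcing number. -/
noncomputable def fracZ {V : Type*} [Fintype V] (G : SimpleGraph V) : ℝ :=
  sInf {x : ℝ | ∃ ω : V → ℝ, (∀ v, 0 ≤ ω v) ∧
    (∀ F : Finset V, IsFort G F → 1 ≤ ∑ v ∈ F, ω v) ∧ x = ∑ v, ω v}

/-- The set of vertices eventually filled by the zero forcing process started at `S`. -/
inductive ZFForced {V : Type*} (G : SimpleGraph V) (S : Set V) : V → Prop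
  | init (v : V) : v ∈ S → ZFForced G S v
  | force (u w : V) : G.Adj u w → ZFForced G S u →
      (∀ x, G.Adj u x → x ≠ w → ZFForced G S x) → ZFForced G S w

/-- A zero forcing set: starting from `S`, every vertex is eventually filled. -/
def IsZeroForcingSet {V : Type*} (G : SimpleGraph V) (S : Set V) : Prop :=
  ∀ v, ZFForced G S v

/-- The zero forcing number: minimum cardinality of a zero forcing set. -/
noncomputable def zfNumber {V : Type*} (G : SimpleGraph V) : ℕ :=
  sInf {k | ∃ S : Finset V, IsZeroForcingSet G ↑S ∧ S.card = k}

open SimpleGraph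

/-! Let `B` be a minimum zero forcing set of `G □ G'`. For forts `Φ` of `G` and `F` of `G'`,
`Φ ×ˢ F` is a fort of the product, so the part of `B` lying over a fort `F` of `G'` projects onto
a zero forcing set of `G` and has at least `Z(G)` elements. Counting the elements of `B` in each
fibre over `G'` and dividing by `Z(G)` therefore gives a fractional fort cover of `G'`.

The extra `+ 1` comes from a vertex `p₀ ∈ B` that can be dropped from this count. Either `B`
contains every vertex with both coordinates non-isolated, or the first force into such a vertex
is made by a vertex of `B` all of whose other neighbours lie in `B`; in both cases `B` contains a
closed neighbourhood inside a row or inside a column. Over a fort through that row, the projection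
of `B` is a zero forcing set of `G` containing a closed neighbourhood, hence not minimum; over a
fort through a neighbour of that column's vertex, two elements of `B` lie in the column. -/

section ZeroForcing

variable {V : Type*}

/-- `u` can perform a force on `w` in the first round of the process started at `S`. -/
structure CanForce (G : SimpleGraph V) (S : Set V) (u w : V) : Prop where
  mem : u ∈ S
  adj : G.Adj u w
  forall_mem : ∀ x, G.Adj u x → x ≠ w → x ∈ S

variable {G : SimpleGraph V}

theorem ZFForced.notMem_of_isFort {S : Set V} {F : Finset V} (hF : IsFort G F)
    (hSF : ∀ s ∈ S, s ∉ F) {v : V} (hv : ZFForced G S v) : v ∉ F := by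
  induction hv with
  | init v hv => exact hSF v hv
  | force u w huw _ _ ihu ihx =>
    intro hw
    exact hF.2 u ihu ⟨w, ⟨hw, huw⟩, fun x hx => not_not.1 fun hxw => ihx x hx.2 hxw hx.1⟩

theorem exists_isFort_of_not_isZeroForcingSet [Fintype V] {S : Set V}
    (h : ¬ IsZeroForcingSet G S) : ∃ F : Finset V, IsFort G F ∧ ∀ s ∈ S, s ∉ F := by
  classical
  obtain ⟨v, hv⟩ := not_forall.1 h
  refine ⟨({v | ¬ ZFForced G S v} : Finset V), ⟨⟨v, by simpa using hv⟩, ?_⟩, ?_⟩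
  · intro u hu ⟨w, ⟨hw, huw⟩, huniq⟩
    simp only [mem_filter, mem_univ, true_and, not_not] at hu hw huniq
    exact hw <| .force u w huw hu fun x hux hxw =>
      not_not.1 fun hx => hxw (huniq x ⟨hx, hux⟩)
  · intro s hs
    simpa using ZFForced.init s hs

theorem IsZeroForcingSet.exists_mem_of_isFort {S : Set V} (hS : IsZeroForcingSet G S)
    {F : Finset V} (hF : IsFort G F) : ∃ s ∈ F, s ∈ S := by
  by_contra! hFS
  obtain ⟨v, hv⟩ := hF.1
  exact ZFForced.notMem_of_isFort hF (fun s hs hsF => hFS s hsF hs) (hS v) hv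

theorem isZeroForcingSet_iff_forall_isFort [Fintype V] {S : Set V} :
    IsZeroForcingSet G S ↔ ∀ F : Finset V, IsFort G F → ∃ s ∈ F, s ∈ S := by
  refine ⟨fun hS F hF => hS.exists_mem_of_isFort hF, fun h => ?_⟩
  · by_contra hS
    obtain ⟨F, hF, hSF⟩ := exists_isFort_of_not_isZeroForcingSet hS
    obtain ⟨s, hsF, hs⟩ := h F hF
    exact hSF s hs hsF

theorem ZFForced.exists_canForce {S R : Set V} (hR : ∀ a b, G.Adj a b → b ∈ R → a ∈ R)
    {v : V} (hv : ZFForced G S v) (hvR : v ∈ R) (hvS : v ∉ S) :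
    ∃ u w, w ∈ R ∧ w ∉ S ∧ CanForce G S u w := by
  induction hv with
  | init v hv => exact absurd hv hvS
  | force u w huw _ _ ihu ihx =>
    have huR := hR u w huw hvR
    by_cases huS : u ∈ S
    · by_cases hall : ∀ x, G.Adj u x → x ≠ w → x ∈ S
      · exact ⟨u, w, hvR, hvS, huS, huw, hall⟩
      · push Not at hall
        obtain ⟨x, hux, hxw, hxS⟩ := hall
        exact ihx x hux hxw (hR x u hux.symm huR) hxS
    · exact ihu huR huS

theorem IsZeroForcingSet.erase [Fintype V] [DecidableEq V] {S : Finset V} {v w : V}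
    (hS : IsZeroForcingSet G ↑S) (hvw : CanForce G ↑S v w) :
    IsZeroForcingSet G ↑(S.erase w) := by
  obtain ⟨hv, hadj, hN⟩ := hvw
  rw [isZeroForcingSet_iff_forall_isFort] at hS ⊢
  intro F hF
  obtain ⟨s, hsF, hs⟩ := hS F hF
  by_cases hsw : s = w
  · subst hsw
    by_cases hvF : v ∈ F
    · exact ⟨v, hvF, mem_erase.2 ⟨hadj.ne, hv⟩⟩
    · by_contra! hno
      refine hF.2 v hvF ⟨s, ⟨hsF, hadj⟩, fun x ⟨hxF, hvx⟩ => not_not.1 fun hxs => ?_⟩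
      exact hno x hxF (mem_erase.2 ⟨hxs, hN x hvx hxs⟩)
  · exact ⟨s, hsF, mem_erase.2 ⟨hsw, hs⟩⟩

theorem zfNumber_le_card {S : Finset V} (hS : IsZeroForcingSet G ↑S) : zfNumber G ≤ #S :=
  Nat.sInf_le ⟨S, hS, rfl⟩

theorem exists_isZeroForcingSet_card_eq_zfNumber [Fintype V] :
    ∃ S : Finset V, IsZeroForcingSet G ↑S ∧ #S = zfNumber G :=
  Nat.sInf_mem (s := {k | ∃ S : Finset V, IsZeroForcingSet G ↑S ∧ #S = k})
    ⟨_, univ, fun v => .init v (mem_univ v), rfl⟩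

theorem zfNumber_lt_card [Fintype V] [DecidableEq V] {S : Finset V} {v w : V}
    (hS : IsZeroForcingSet G ↑S) (hv : v ∈ S) (hvw : G.Adj v w)
    (hN : ∀ x, G.Adj v x → x ∈ S) : zfNumber G < #S := by
  have hS' := hS.erase ⟨hv, hvw, fun x hvx _ => hN x hvx⟩
  have := zfNumber_le_card hS'
  rw [card_erase_of_mem (hN w hvw)] at this
  have := card_pos.2 ⟨v, hv⟩
  omega

end ZeroForcing

section BoxProd

variable {V V' : Type*} {G : SimpleGraph V} {H : SimpleGraph V'}

theorem IsFort.boxProd {Φ : Finset V} {F : Finset V'} (hΦ : IsFort G Φ) (hF : IsFort H F) :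
    IsFort (G □ H) (Φ ×ˢ F) := by
  refine ⟨hΦ.1.product hF.1, ?_⟩
  rintro ⟨a, b⟩ hab ⟨⟨c, d⟩, ⟨hcd, hadj⟩, huniq⟩
  rw [mem_product] at hab hcd
  rcases boxProd_adj.1 hadj with ⟨hac, rfl⟩ | ⟨hbd, rfl⟩
  · refine hΦ.2 a (fun ha => hab ⟨ha, hcd.2⟩) ⟨c, ⟨hcd.1, hac⟩, fun x ⟨hx, hax⟩ => ?_⟩
    exact congrArg Prod.fst
      (huniq (x, b) ⟨mem_product.2 ⟨hx, hcd.2⟩, boxProd_adj.2 (.inl ⟨hax, rfl⟩)⟩)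
  · refine hF.2 b (fun hb => hab ⟨hcd.1, hb⟩) ⟨d, ⟨hcd.2, hbd⟩, fun y ⟨hy, hby⟩ => ?_⟩
    exact congrArg Prod.snd
      (huniq (a, y) ⟨mem_product.2 ⟨hcd.1, hy⟩, boxProd_adj.2 (.inr ⟨hby, rfl⟩)⟩)

variable {B : Finset (V × V')}

section Filter

variable [Fintype V] [DecidableEq V] [DecidableEq V'] {F : Finset V'}

theorem IsZeroForcingSet.image_fst_filter (hB : IsZeroForcingSet (G □ H) ↑B) (hF : IsFort H F) :
    IsZeroForcingSet G ↑({p ∈ B | p.2 ∈ F}.image Prod.fst) := by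
  rw [isZeroForcingSet_iff_forall_isFort]
  intro Φ hΦ
  obtain ⟨s, hsΦF, hsB⟩ := hB.exists_mem_of_isFort (hΦ.boxProd hF)
  rw [mem_product] at hsΦF
  exact ⟨s.1, hsΦF.1, mem_image_of_mem _ (mem_filter.2 ⟨hsB, hsΦF.2⟩)⟩

theorem zfNumber_le_card_filter (hB : IsZeroForcingSet (G □ H) ↑B) (hF : IsFort H F) :
    zfNumber G ≤ #{p ∈ B | p.2 ∈ F} :=
  (zfNumber_le_card (hB.image_fst_filter hF)).trans card_image_le

theorem zfNumber_lt_card_filter_of_row (hB : IsZeroForcingSet (G □ H) ↑B) (hF : IsFort H F)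
    {g w : V} {h : V'} (hh : h ∈ F) (hgw : G.Adj g w) (hg : (g, h) ∈ B)
    (hrow : ∀ x, G.Adj g x → (x, h) ∈ B) : zfNumber G < #{p ∈ B | p.2 ∈ F} := by
  have hmem : ∀ x, (x, h) ∈ B → x ∈ {p ∈ B | p.2 ∈ F}.image Prod.fst := fun x hx =>
    mem_image_of_mem Prod.fst (mem_filter.2 ⟨hx, hh⟩)
  exact (zfNumber_lt_card (hB.image_fst_filter hF) (hmem g hg) hgw
    fun x hgx => hmem x (hrow x hgx)).trans_le card_image_le

theorem zfNumber_lt_card_filter_of_column (hB : IsZeroForcingSet (G □ H) ↑B) (hF : IsFort H F)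
    {g : V} {h h₀ : V'} (hh₀ : h₀ ∈ F) (hhh₀ : H.Adj h h₀) (hg : (g, h) ∈ B)
    (hcol : ∀ y, H.Adj h y → (g, y) ∈ B) : zfNumber G < #{p ∈ B | p.2 ∈ F} := by
  -- the column of `g` meets `B` over `F` twice, so the projection to `G` is not injective
  have hsecond : ∃ h₁ ∈ F, h₁ ≠ h₀ ∧ (g, h₁) ∈ B := by
    by_cases hhF : h ∈ F
    · exact ⟨h, hhF, hhh₀.ne, hg⟩
    · by_contra! hno
      exact hF.2 h hhF ⟨h₀, ⟨hh₀, hhh₀⟩, fun y ⟨hy, hhy⟩ =>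
        not_not.1 fun hyh₀ => hno y hy hyh₀ (hcol y hhy)⟩
  obtain ⟨h₁, hh₁, hh₁h₀, hgh₁⟩ := hsecond
  have hinj : ¬ Set.InjOn Prod.fst ↑{p ∈ B | p.2 ∈ F} := fun hinj =>
    hh₁h₀ (congrArg Prod.snd (@hinj (g, h₁) (mem_filter.2 ⟨hgh₁, hh₁⟩) (g, h₀)
      (mem_filter.2 ⟨hcol h₀ hhh₀, hh₀⟩) rfl))
  exact (zfNumber_le_card (hB.image_fst_filter hF)).trans_lt
    (card_image_le.lt_of_ne (mt card_image_iff.1 hinj))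

end Filter

theorem IsZeroForcingSet.exists_row_or_column_subset (hB : IsZeroForcingSet (G □ H) ↑B)
    (hG : ∃ u v, G.Adj u v) (hH : ∃ u v, H.Adj u v) :
    ∃ g h, (∃ x, G.Adj g x) ∧ (∃ y, H.Adj h y) ∧ (g, h) ∈ B ∧
      ((∀ x, G.Adj g x → (x, h) ∈ B) ∨ ∀ y, H.Adj h y → (g, y) ∈ B) := by
  by_cases hfull : ∀ g h, (∃ x, G.Adj g x) → (∃ y, H.Adj h y) → (g, h) ∈ B
  · obtain ⟨g, x, hgx⟩ := hG
    obtain ⟨h, y, hhy⟩ := hH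
    exact ⟨g, h, ⟨x, hgx⟩, ⟨y, hhy⟩, hfull g h ⟨x, hgx⟩ ⟨y, hhy⟩,
      .inl fun x' hgx' => hfull x' h ⟨g, hgx'.symm⟩ ⟨y, hhy⟩⟩
  push Not at hfull
  obtain ⟨g, h, hg, hh, hgh⟩ := hfull
  -- vertices with both coordinates non-isolated form a union of components of `G □ H`
  let R : Set (V × V') := {p | (∃ x, G.Adj p.1 x) ∧ ∃ y, H.Adj p.2 y}
  have hR : ∀ a b, (G □ H).Adj a b → b ∈ R → a ∈ R := by
    rintro a b hab ⟨⟨x, hx⟩, ⟨y, hy⟩⟩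
    rcases boxProd_adj.1 hab with ⟨hG₁, hb₂⟩ | ⟨hH₂, hb₁⟩
    · exact ⟨⟨b.1, hG₁⟩, hb₂ ▸ ⟨y, hy⟩⟩
    · exact ⟨hb₁ ▸ ⟨x, hx⟩, ⟨b.2, hH₂⟩⟩
  obtain ⟨p, q, hqR, -, hpB, hpq, hN⟩ := (hB (g, h)).exists_canForce hR ⟨hg, hh⟩ hgh
  obtain ⟨hp₁, hp₂⟩ := hR p q hpq hqR
  refine ⟨p.1, p.2, hp₁, hp₂, hpB, ?_⟩
  rcases boxProd_adj.1 hpq with ⟨hG₁, -⟩ | ⟨hH₂, -⟩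
  · exact .inr fun y hy =>
      hN _ (boxProd_adj.2 (.inr ⟨hy, rfl⟩)) fun hq => hG₁.ne (by rw [← hq])
  · exact .inl fun x hx =>
      hN _ (boxProd_adj.2 (.inl ⟨hx, rfl⟩)) fun hq => hH₂.ne (by rw [← hq])

theorem IsZeroForcingSet.exists_mem_zfNumber_lt_card_filter [Fintype V] [DecidableEq V]
    [DecidableEq V'] (hB : IsZeroForcingSet (G □ H) ↑B)
    (hG : ∃ u v, G.Adj u v) (hH : ∃ u v, H.Adj u v) :
    ∃ p₀ ∈ B, ∀ F, IsFort H F → p₀.2 ∈ F → zfNumber G < #{p ∈ B | p.2 ∈ F} := by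
  obtain ⟨g, h, ⟨w, hgw⟩, ⟨h₀, hhh₀⟩, hgh, hrow | hcol⟩ :=
    hB.exists_row_or_column_subset hG hH
  · exact ⟨(g, h), hgh, fun F hF hh => zfNumber_lt_card_filter_of_row hB hF hh hgw hgh hrow⟩
  · exact ⟨(g, h₀), hcol h₀ hhh₀,
      fun F hF hh₀ => zfNumber_lt_card_filter_of_column hB hF hh₀ hhh₀ hgh hcol⟩

end BoxProd

section FractionalZeroForcing

variable {V : Type*} [Fintype V] {G : SimpleGraph V}

theorem fracZ_le_sum (ω : V → ℝ) (hω : ∀ v, 0 ≤ ω v)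
    (hF : ∀ F : Finset V, IsFort G F → 1 ≤ ∑ v ∈ F, ω v) : fracZ G ≤ ∑ v, ω v :=
  csInf_le ⟨0, by rintro _ ⟨ω', hω', -, rfl⟩; exact sum_nonneg fun v _ => hω' v⟩
    ⟨ω, hω, hF, rfl⟩

theorem mul_fracZ_le_card [DecidableEq V] {β : Type*} (f : β → V) (B : Finset β) (k : ℕ)
    (hk : ∀ F : Finset V, IsFort G F → k ≤ #{b ∈ B | f b ∈ F}) : k * fracZ G ≤ #B := by
  rcases k.eq_zero_or_pos with rfl | hk₀
  · simp
  have hk₀' : (0 : ℝ) < k := by exact_mod_cast hk₀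
  have hfibre (F : Finset V) : ∑ v ∈ F, (#{b ∈ B | f b = v} : ℝ) = #{b ∈ B | f b ∈ F} := by
    simp only [card_filter, Nat.cast_sum, Nat.cast_ite, Nat.cast_one, Nat.cast_zero]
    rw [sum_comm]
    simp [sum_ite_eq]
  calc (k : ℝ) * fracZ G ≤ k * ∑ v, (#{b ∈ B | f b = v} : ℝ) / k := by
        gcongr
        refine fracZ_le_sum _ (fun v => by positivity) fun F hF => ?_
        rw [← sum_div, hfibre, le_div_iff₀ hk₀', one_mul]
        exact_mod_cast hk F hF
    _ = #B := by
        rw [← sum_div, mul_div_cancel₀ _ hk₀'.ne', hfibre]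
        simp

end FractionalZeroForcing

/-- if `G` and `G'` each contain an edge and `Z(G') = Z*(G')`, then
`Z(G □ G') ≥ Z(G) · Z(G') + 1`. -/
theorem zfNumber_boxProd_ge_prod_add_one {V V' : Type*} [Fintype V] [Fintype V']
    (G : SimpleGraph V) (G' : SimpleGraph V')
    (hG : ∃ u v, G.Adj u v) (hG' : ∃ u v, G'.Adj u v)
    (heq : (zfNumber G' : ℝ) = fracZ G') :
    zfNumber G * zfNumber G' + 1 ≤ zfNumber (G □ G') := by
  classical
  obtain ⟨B, hB, hBcard⟩ := exists_isZeroForcingSet_card_eq_zfNumber (G := G □ G')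
  obtain ⟨p₀, hp₀, hlt⟩ := hB.exists_mem_zfNumber_lt_card_filter hG hG'
  have hcover : ∀ F, IsFort G' F → zfNumber G ≤ #{p ∈ B.erase p₀ | p.2 ∈ F} := by
    intro F hF
    rw [filter_erase]
    by_cases hp₀F : p₀.2 ∈ F
    · rw [card_erase_of_mem (mem_filter.2 ⟨hp₀, hp₀F⟩)]
      have := hlt F hF hp₀F
      omega
    · have hp₀' : p₀ ∉ {p ∈ B | p.2 ∈ F} := fun h => hp₀F (mem_filter.1 h).2
      rw [erase_eq_of_notMem hp₀']
      exact zfNumber_le_card_filter hB hF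
  have hmul := mul_fracZ_le_card Prod.snd _ _ hcover
  rw [← heq, card_erase_of_mem hp₀, hBcard] at hmul
  have hpos : 0 < zfNumber (G □ G') := hBcard ▸ card_pos.2 ⟨p₀, hp₀⟩
  have : zfNumber G * zfNumber G' ≤ zfNumber (G □ G') - 1 := by exact_mod_cast hmul
  omega
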